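/- arXiv:1910.11953 — 2 statements merged into one kernel-verified Lean document; each statement's English description precedes it below -/
import Mathlib

section
/- Let K ≥ 2, N ≥ 1, x : {1,…,N} → {1,…,K} with every category nonempty (I_k ≠ ∅ for all k), and let u = (u_1,…,u_N) ∈ Δ^N with all coordinates u_{n,ℓ} > 0. Then u ∈ R_x (i.e., F(u) ≠ ∅) if and only if for every L ≥ 1 and all indices j_1,…,j_L ∈ {1,…,K}, the cyclic product η_{j_1→j_2}(u) · η_{j_2→j_3}(u) ⋯ η_{j_L→j_1}(u) ≥ 1. -/
noncomputable section

/-- The `ℓ`-th vertex of the probability simplex in `ℝ^K` (standard basis vector). -/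
def vtx (K : ℕ) (ℓ : Fin K) : Fin K → ℝ := fun i => if i = ℓ then 1 else 0

/-- The subsimplex `Δ_k(θ)`: convex hull of `{θ} ∪ {V_ℓ : ℓ ≠ k}`. -/
def subsimplex (K : ℕ) (k : Fin K) (θ : Fin K → ℝ) : Set (Fin K → ℝ) :=
  convexHull ℝ (insert θ {z | ∃ ℓ : Fin K, ℓ ≠ k ∧ z = vtx K ℓ})

open Finset Classical in
/-- Extraction lemma: membership in the subsimplex gives a weight `t` on `θ`. -/
lemma subsimplex_extract {K : ℕ} {k : Fin K} {θ v : Fin K → ℝ}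
    (hv : v ∈ subsimplex K k θ) :
    ∃ t : ℝ, 0 ≤ t ∧ v k = t * θ k ∧ ∀ ℓ, t * θ ℓ ≤ v ℓ := by
  rw [subsimplex, mem_convexHull_iff_exists_fintype] at hv
  obtain ⟨ι, _, w, z, hw0, hw1, hz, hsum⟩ := hv
  classical
  refine ⟨∑ i ∈ univ.filter (fun i => z i = θ), w i, ?_, ?_, ?_⟩
  · exact Finset.sum_nonneg fun i _ => hw0 i
  · have := congrFun hsum k
    simp only [Finset.sum_apply, Pi.smul_apply, smul_eq_mul] at this
    rw [← this, Finset.sum_mul,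
      ← Finset.sum_filter_add_sum_filter_not univ (fun i => z i = θ) (fun i => w i * z i k)]
    have h1 : ∀ i ∈ univ.filter (fun i => z i = θ), w i * z i k = w i * θ k := by
      intro i hi; simp only [mem_filter] at hi; rw [hi.2]
    have h2 : ∀ i ∈ univ.filter (fun i => ¬ z i = θ), w i * z i k = 0 := by
      intro i hi; simp only [mem_filter] at hi
      rcases hz i with h | ⟨ℓ, hℓk, hℓ⟩
      · exact absurd h hi.2
      · rw [hℓ]; simp [vtx, hℓk.symm]
    rw [Finset.sum_congr rfl h1, Finset.sum_congr rfl h2]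
    simp
  · intro ℓ
    have := congrFun hsum ℓ
    simp only [Finset.sum_apply, Pi.smul_apply, smul_eq_mul] at this
    rw [← this, Finset.sum_mul,
      ← Finset.sum_filter_add_sum_filter_not univ (fun i => z i = θ) (fun i => w i * z i ℓ)]
    have h1 : ∑ i ∈ univ.filter (fun i => z i = θ), w i * z i ℓ
        = ∑ i ∈ univ.filter (fun i => z i = θ), w i * θ ℓ := by
      refine Finset.sum_congr rfl ?_
      intro i hi; simp only [mem_filter] at hi; rw [hi.2]
    rw [h1, ← Finset.sum_mul]
    have h2 : 0 ≤ ∑ i ∈ univ.filter (fun i => ¬ z i = θ), w i * z i ℓ := by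
      refine Finset.sum_nonneg fun i hi => ?_
      simp only [mem_filter] at hi
      rcases hz i with h | ⟨ℓ', hℓk, hℓ⟩
      · exact absurd h hi.2
      · rw [hℓ]; unfold vtx
        by_cases hc : ℓ = ℓ' <;> simp [hc, hw0 i]
    linarith

open Finset in
/-- Construction lemma: the ratio inequalities imply membership in the subsimplex. -/
lemma mem_subsimplex_of {K : ℕ} {k : Fin K} {θ v : Fin K → ℝ}
    (hθ : θ ∈ stdSimplex ℝ (Fin K)) (hv : v ∈ stdSimplex ℝ (Fin K))
    (hθk : 0 < θ k) (h : ∀ ℓ, θ ℓ * v k ≤ v ℓ * θ k) :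
    v ∈ subsimplex K k θ := by
  classical
  set t : ℝ := v k / θ k with ht
  have htθk : t * θ k = v k := div_mul_cancel₀ (v k) (ne_of_gt hθk)
  have hkey : ∀ ℓ, t * θ ℓ ≤ v ℓ := by
    intro ℓ
    rw [ht, div_mul_eq_mul_div, div_le_iff₀ hθk, mul_comm (v k)]
    exact h ℓ
  set w : Fin K → ℝ := fun ℓ => (v ℓ - t * θ ℓ) + (if ℓ = k then t else 0) with hw
  set z : Fin K → (Fin K → ℝ) := fun ℓ => if ℓ = k then θ else vtx K ℓ with hz
  have hw0 : ∀ ℓ, 0 ≤ w ℓ := by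
    intro ℓ
    by_cases hc : ℓ = k
    · rw [hc]
      have hwk : w k = t := by
        show v k - t * θ k + (if k = k then t else 0) = t
        rw [if_pos rfl]; linarith
      rw [hwk]
      exact div_nonneg (hv.1 k) hθk.le
    · simp only [hw, hc, if_false, add_zero, sub_nonneg]
      exact hkey ℓ
  have hw1 : ∑ ℓ, w ℓ = 1 := by
    simp only [hw]
    rw [Finset.sum_add_distrib, Finset.sum_sub_distrib, Finset.sum_ite_eq' univ k (fun _ => t)]
    simp only [mem_univ, if_true]
    rw [← Finset.mul_sum, hv.2, hθ.2]
    ring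
  refine mem_convexHull_of_exists_fintype w z hw0 hw1 ?_ ?_
  · intro ℓ
    by_cases hc : ℓ = k
    · simp [hz, hc]
    · right; exact ⟨ℓ, hc, by simp [hz, hc]⟩
  · funext i
    simp only [Finset.sum_apply, Pi.smul_apply, smul_eq_mul, hz]
    have hsplit : ∑ ℓ, w ℓ * (if ℓ = k then θ else vtx K ℓ) i
        = ∑ ℓ ∈ univ \ {k}, w ℓ * (if ℓ = k then θ else vtx K ℓ) i
          + w k * θ i := by
      rw [Finset.sum_eq_sum_sdiff_singleton_add (Finset.mem_univ k)]
      simp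
    rw [hsplit]
    have h2 : ∑ ℓ ∈ univ \ {k}, w ℓ * (if ℓ = k then θ else vtx K ℓ) i
        = ∑ ℓ ∈ univ \ {k}, (if i = ℓ then w ℓ else 0) := by
      refine Finset.sum_congr rfl fun ℓ hℓ => ?_
      simp only [Finset.mem_sdiff, Finset.mem_singleton] at hℓ
      rw [if_neg hℓ.2]
      unfold vtx
      by_cases hc : i = ℓ <;> simp [hc]
    rw [h2, Finset.sum_ite_eq (univ \ {k}) i w]
    have hwk : w k = t := by
      show v k - t * θ k + (if k = k then t else 0) = t
      rw [if_pos rfl]; linarith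
    by_cases hc : i = k
    · simp only [hc]
      rw [if_neg (by simp), hwk, zero_add, htθk]
    · have hmem : i ∈ univ \ ({k} : Finset (Fin K)) := by simp [hc]
      rw [if_pos hmem, hwk]
      simp only [hw, hc, if_false, add_zero]
      ring

theorem stmt11 (K N : ℕ) (hK : 2 ≤ K) (hN : 1 ≤ N)
    (x : Fin N → Fin K) (hx : ∀ k, ∃ n, x n = k)
    (u : Fin N → Fin K → ℝ) (hu : ∀ n, u n ∈ stdSimplex ℝ (Fin K))
    (hupos : ∀ n ℓ, 0 < u n ℓ)
    (η : Fin K → Fin K → ℝ)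
    (hη : ∀ k ℓ, IsLeast {v : ℝ | ∃ n, x n = k ∧ v = u n ℓ / u n k} (η k ℓ)) :
    (∃ θ ∈ stdSimplex ℝ (Fin K), ∀ n, u n ∈ subsimplex K (x n) θ) ↔
      (∀ (L : ℕ) (j : Fin (L + 1) → Fin K),
        1 ≤ ∏ i : Fin (L + 1), η (j i) (j (i + 1))) := by
  have hηpos : ∀ k ℓ, 0 < η k ℓ := by
    intro k ℓ
    obtain ⟨⟨n, hn, hv⟩, _⟩ := hη k ℓ
    rw [hv]
    exact div_pos (hupos n ℓ) (hupos n k)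
  have hηle : ∀ k ℓ n, x n = k → η k ℓ ≤ u n ℓ / u n k := fun k ℓ n hn =>
    (hη k ℓ).2 ⟨n, hn, rfl⟩
  constructor
  · -- forward
    rintro ⟨θ, hθ, hmem⟩ L j
    -- θ is positive on every coordinate, and ratio inequality
    have hratio : ∀ n ℓ, θ ℓ * u n (x n) ≤ u n ℓ * θ (x n) := by
      intro n ℓ
      obtain ⟨t, ht0, htk, htle⟩ := subsimplex_extract (hmem n)
      calc θ ℓ * u n (x n) = (t * θ ℓ) * θ (x n) := by rw [htk]; ring
        _ ≤ u n ℓ * θ (x n) :=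
          mul_le_mul_of_nonneg_right (htle ℓ) (hθ.1 (x n))
    have hθpos : ∀ k, 0 < θ k := by
      intro k
      obtain ⟨n, hn⟩ := hx k
      obtain ⟨t, ht0, htk, htle⟩ := subsimplex_extract (hmem n)
      have h0 : 0 < t * θ (x n) := by rw [← htk]; exact hupos n (x n)
      rw [hn] at h0
      by_contra hneg
      push_neg at hneg
      nlinarith
    have hkey : ∀ k ℓ, θ ℓ / θ k ≤ η k ℓ := by
      intro k ℓ
      obtain ⟨⟨n, hn, hv⟩, _⟩ := hη k ℓ
      rw [hv, div_le_div_iff₀ (hθpos k) (hupos n k)]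
      have := hratio n ℓ
      rw [hn] at this
      linarith
    calc (1:ℝ) = ∏ i : Fin (L+1), θ (j (i + 1)) / θ (j i) := by
          rw [Finset.prod_div_distrib]
          have : ∏ i : Fin (L+1), θ (j (i + 1)) = ∏ i : Fin (L+1), θ (j i) := by
            exact Fintype.prod_equiv (Equiv.addRight (1 : Fin (L+1))) _ _ (fun i => rfl)
          rw [this, div_self]
          exact ne_of_gt (Finset.prod_pos fun i _ => hθpos (j i))
      _ ≤ ∏ i : Fin (L+1), η (j i) (j (i + 1)) := by
          refine Finset.prod_le_prod (fun i _ => ?_) (fun i _ => hkey _ _)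
          exact le_of_lt (div_pos (hθpos _) (hθpos _))
  · -- backward
    intro hcyc
    have hK0 : 0 < K := by omega
    set k₀ : Fin K := ⟨0, hK0⟩ with hk₀
    set S : Fin K → Set ℝ := fun ℓ =>
      {v | ∃ (m : ℕ) (p : Fin (m+1) → Fin K), p 0 = k₀ ∧ p (Fin.last m) = ℓ ∧
        v = ∏ i : Fin m, η (p i.castSucc) (p i.succ)} with hS
    -- each S ℓ is nonempty
    have hSne : ∀ ℓ, (S ℓ).Nonempty := by
      intro ℓ
      refine ⟨η k₀ ℓ, 1, fun i => if i = 0 then k₀ else ℓ, ?_, ?_, ?_⟩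
      · simp
      · simp [Fin.last]
      · rw [Fin.prod_univ_one]
        norm_num [Fin.ext_iff]
    -- path values are bounded below using the cycle condition
    have hSlb : ∀ ℓ v, v ∈ S ℓ → 1 / η ℓ k₀ ≤ v := by
      intro ℓ v hv
      obtain ⟨m, p, hp0, hpl, hval⟩ := hv
      have hcycle := hcyc m (fun i => p i)
      have hprod : ∏ i : Fin (m + 1), η (p i) (p (i + 1))
          = (∏ i : Fin m, η (p i.castSucc) (p i.succ)) * η ℓ k₀ := by
        rw [Fin.prod_univ_castSucc (fun i : Fin (m+1) => η (p i) (p (i + 1)))]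
        congr 1
        · refine Finset.prod_congr rfl fun i _ => ?_
          rw [Fin.coeSucc_eq_succ]
        · rw [hpl, Fin.last_add_one, hp0]
      rw [hprod] at hcycle
      rw [div_le_iff₀ (hηpos ℓ k₀), hval]
      exact hcycle
    -- the infima
    set θ' : Fin K → ℝ := fun ℓ => sInf (S ℓ) with hθ'
    have hθ'pos : ∀ ℓ, 0 < θ' ℓ := by
      intro ℓ
      have h1 : 1 / η ℓ k₀ ≤ θ' ℓ := le_csInf (hSne ℓ) (fun v hv => hSlb ℓ v hv)
      have h2 := hηpos ℓ k₀
      have : 0 < 1 / η ℓ k₀ := by positivity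
      linarith
    have hbdd : ∀ ℓ, BddBelow (S ℓ) := fun ℓ => ⟨1 / η ℓ k₀, fun v hv => hSlb ℓ v hv⟩
    -- the key inequality θ' ℓ ≤ η k ℓ * θ' k
    have hstep : ∀ k ℓ, θ' ℓ ≤ η k ℓ * θ' k := by
      intro k ℓ
      have hlb : ∀ v ∈ S k, θ' ℓ / η k ℓ ≤ v := by
        intro v hv
        obtain ⟨m, p, hp0, hpl, hval⟩ := hv
        set q : Fin (m+2) → Fin K := Fin.snoc p ℓ with hq
        have hmem : v * η k ℓ ∈ S ℓ := by
          refine ⟨m + 1, q, ?_, ?_, ?_⟩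
          · rw [hq, show (0 : Fin (m+2)) = Fin.castSucc 0 from rfl, Fin.snoc_castSucc]
            exact hp0
          · simp [hq]
          · have key := Fin.prod_univ_castSucc
              (fun j : Fin (m+1) => η (q j.castSucc) (q j.succ))
            rw [key, hval, hq]
            congr 1
            · refine Finset.prod_congr rfl fun i _ => ?_
              rw [Fin.succ_castSucc, Fin.snoc_castSucc, Fin.snoc_castSucc]
            · rw [show (Fin.last m).succ = Fin.last (m+1) from rfl, Fin.snoc_last,
                Fin.snoc_castSucc, hpl]
        have := csInf_le (hbdd ℓ) hmem
        rw [div_le_iff₀ (hηpos k ℓ)]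
        exact this
      have h2 : θ' ℓ / η k ℓ ≤ θ' k := le_csInf (hSne k) hlb
      rw [div_le_iff₀ (hηpos k ℓ)] at h2
      linarith [h2]
    -- normalize
    set T : ℝ := ∑ ℓ, θ' ℓ with hT
    have hTpos : 0 < T := Finset.sum_pos (fun ℓ _ => hθ'pos ℓ) ⟨k₀, Finset.mem_univ k₀⟩
    refine ⟨fun ℓ => θ' ℓ / T, ⟨fun ℓ => le_of_lt (div_pos (hθ'pos ℓ) hTpos), ?_⟩, ?_⟩
    · rw [← Finset.sum_div, div_self (ne_of_gt hTpos)]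
    · intro n
      refine mem_subsimplex_of ⟨fun ℓ => le_of_lt (div_pos (hθ'pos ℓ) hTpos), ?_⟩ (hu n)
        (div_pos (hθ'pos (x n)) hTpos) ?_
      · rw [← Finset.sum_div, div_self (ne_of_gt hTpos)]
      · intro ℓ
        have h1 : θ' ℓ ≤ η (x n) ℓ * θ' (x n) := hstep (x n) ℓ
        have h2 : η (x n) ℓ ≤ u n ℓ / u n (x n) := hηle (x n) ℓ n rfl
        have h3 : θ' ℓ * u n (x n) ≤ u n ℓ * θ' (x n) := by
          have h4 : η (x n) ℓ * θ' (x n) ≤ (u n ℓ / u n (x n)) * θ' (x n) :=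
            mul_le_mul_of_nonneg_right h2 (hθ'pos (x n)).le
          have h5 : θ' ℓ ≤ (u n ℓ / u n (x n)) * θ' (x n) := le_trans h1 h4
          calc θ' ℓ * u n (x n) ≤ ((u n ℓ / u n (x n)) * θ' (x n)) * u n (x n) :=
                mul_le_mul_of_nonneg_right h5 (hupos n (x n)).le
            _ = u n ℓ * θ' (x n) := by
                have h0 : u n (x n) ≠ 0 := ne_of_gt (hupos n (x n))
                field_simp
        calc θ' ℓ / T * u n (x n) = (θ' ℓ * u n (x n)) / T := by ring
          _ ≤ (u n ℓ * θ' (x n)) / T := by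
              exact div_le_div_of_nonneg_right h3 hTpos.le |>.trans_eq rfl
          _ = u n ℓ * (θ' (x n) / T) := by ring
end
end

section
/- Let K ≥ 2, N ≥ 1, x : {1,…,N} → {1,…,K} with every category nonempty, and let u ∈ Δ^N have all coordinates strictly positive with u ∈ R_x. Fix k ∈ {1,…,K}. With edge weights log η_{j→ℓ}(u), let m(ℓ) = min(ℓ→k) over simple walks from ℓ to k, and define θ* ∈ Δ by θ*_ℓ = exp(−m(ℓ)) / Σ_{ℓ'} exp(−m(ℓ')); note that θ* depends only on the components u_n with n ∉ I_k, since a simple walk ending at k uses no edge out of k. Then for every family v = (v_n)_{n∈I_k} of points of Δ with strictly positive coordinates, the vector u' obtained from u by replacing u_n with v_n for each n ∈ I_k satisfies: u' ∈ R_x if and only if v_n ∈ Δ_k(θ*) for all n ∈ I_k. -/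
noncomputable section

/-- The weight of the walk `j 0, j 1, …, j m` for edge weights `w`. -/
def walkWeight (K : ℕ) (w : Fin K → Fin K → ℝ) (m : ℕ) (j : Fin (m + 1) → Fin K) : ℝ :=
  ∑ i : Fin m, w (j i.castSucc) (j i.succ)

/-- The minimum weight over simple walks (pairwise distinct vertices) from `a` to `b`. -/
def minWalk (K : ℕ) (w : Fin K → Fin K → ℝ) (a b : Fin K) : ℝ :=
  sInf {v : ℝ | ∃ (m : ℕ) (j : Fin (m + 1) → Fin K),
    j 0 = a ∧ j (Fin.last m) = b ∧ Function.Injective j ∧ v = walkWeight K w m j}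

/-!
A feasible `θ` is positive, and `log θ` is a potential for the edge weights:
`log θ_b - log θ_a ≤ log η_{a→b}`, because inside `Δ` the set `Δ_a(θ)` is cut out by the
inequalities `θ_b z_a ≤ θ_a z_b`. A potential rules out negative cycles, so `m = min(· → k)`
satisfies `m k = 0` and the triangle inequality `m a ≤ log η_{a→b} + m b`, which says precisely
that `θ*` is feasible for every `n ∉ I_k`. Conversely, if `θ` is feasible for `u'`, then `log θ`
is still a potential on the edges not leaving `k`, the only edges of simple walks into `k`;
summing along such walks gives `θ_ℓ / θ_k ≥ exp (-m ℓ) = θ*_ℓ / θ*_k`, hence `Δ_k(θ) ⊆ Δ_k(θ*)`.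
-/

open Real Finset

section Subsimplex

variable {K : ℕ} {k : Fin K} {θ z : Fin K → ℝ}

lemma mul_le_mul_of_mem_subsimplex (hθk : 0 ≤ θ k) (hz : z ∈ subsimplex K k θ) (ℓ : Fin K) :
    θ ℓ * z k ≤ θ k * z ℓ := by
  have hconv : Convex ℝ {p : Fin K → ℝ | θ ℓ * p k - θ k * p ℓ ≤ 0} :=
    convex_halfSpace_le ⟨fun p q => by simp only [Pi.add_apply]; ring,
      fun c p => by simp only [Pi.smul_apply, smul_eq_mul]; ring⟩ 0
  refine sub_nonpos.1 (convexHull_min ?_ hconv hz)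
  rintro p (rfl | ⟨ℓ', hℓ', rfl⟩)
  · simp [mul_comm]
  · simp only [Set.mem_ofPred_eq, vtx, if_neg hℓ'.symm, mul_zero, zero_sub, neg_nonpos]
    split_ifs <;> simp [hθk]

lemma le_of_mem_subsimplex (hθ : θ ∈ stdSimplex ℝ (Fin K)) (hz : z ∈ stdSimplex ℝ (Fin K))
    (hzθ : z ∈ subsimplex K k θ) : z k ≤ θ k := by
  have h := Finset.sum_le_sum fun ℓ (_ : ℓ ∈ univ) => mul_le_mul_of_mem_subsimplex (hθ.1 k) hzθ ℓ
  rwa [← Finset.sum_mul, ← Finset.mul_sum, hθ.2, hz.2, one_mul, mul_one] at h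

lemma mem_subsimplex_of_forall_mul_le (hθ : θ ∈ stdSimplex ℝ (Fin K))
    (hz : z ∈ stdSimplex ℝ (Fin K)) (hθk : 0 < θ k) (h : ∀ ℓ, θ ℓ * z k ≤ θ k * z ℓ) :
    z ∈ subsimplex K k θ := by
  set t := z k / θ k
  set c : Fin K → ℝ := fun ℓ => z ℓ - t * θ ℓ
  have hck : c k = 0 := by simp [c, t, div_mul_cancel₀ _ hθk.ne']
  have hc : ∀ ℓ, 0 ≤ c ℓ := fun ℓ => by
    simp only [c, t, sub_nonneg, div_mul_eq_mul_div, div_le_iff₀ hθk]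
    linarith [h ℓ]
  -- `z = t • θ + ∑_{ℓ ≠ k} c ℓ • V_ℓ`, a convex combination since `c k = 0` and `∑ c = 1 - t`
  set W : Fin K → ℝ := fun ℓ => c ℓ + if ℓ = k then t else 0
  set P : Fin K → Fin K → ℝ := fun ℓ => if ℓ = k then θ else vtx K ℓ
  have hWP : ∀ ℓ, W ℓ • P ℓ = (if ℓ = k then t • θ else 0) + c ℓ • vtx K ℓ := by
    intro ℓ
    by_cases hℓ : ℓ = k
    · subst hℓ; simp [W, P, hck]
    · simp [W, P, hℓ]
  have hsum : ∑ ℓ, W ℓ • P ℓ = z := by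
    rw [Finset.sum_congr rfl fun ℓ _ => hWP ℓ, Finset.sum_add_distrib, Finset.sum_ite_eq']
    ext i
    simp [Finset.sum_apply, vtx, c]
  rw [← hsum]
  refine (convex_convexHull ℝ _).sum_mem (fun ℓ _ => ?_) ?_ (fun ℓ _ => subset_convexHull ℝ _ ?_)
  · exact add_nonneg (hc ℓ) (by split_ifs; exacts [div_nonneg (hz.1 k) hθk.le, le_rfl])
  · simp [W, c, Finset.sum_add_distrib, Finset.sum_sub_distrib, ← Finset.mul_sum, hθ.2, hz.2]
  · by_cases hℓ : ℓ = k
    · simp [P, hℓ]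
    · simp only [P, if_neg hℓ]
      exact Set.mem_insert_of_mem _ ⟨ℓ, hℓ, rfl⟩

lemma mem_subsimplex_iff_log (hθ : θ ∈ stdSimplex ℝ (Fin K)) (hθpos : ∀ ℓ, 0 < θ ℓ)
    (hz : z ∈ stdSimplex ℝ (Fin K)) (hzpos : ∀ ℓ, 0 < z ℓ) :
    z ∈ subsimplex K k θ ↔ ∀ ℓ, log (θ ℓ) - log (θ k) ≤ log (z ℓ) - log (z k) := by
  have hlog : ∀ ℓ, θ ℓ * z k ≤ θ k * z ℓ ↔ log (θ ℓ) - log (θ k) ≤ log (z ℓ) - log (z k) := by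
    intro ℓ
    rw [← log_le_log_iff (mul_pos (hθpos ℓ) (hzpos k)) (mul_pos (hθpos k) (hzpos ℓ)),
      log_mul (hθpos ℓ).ne' (hzpos k).ne', log_mul (hθpos k).ne' (hzpos ℓ).ne']
    constructor <;> intro h <;> linarith
  exact ⟨fun h ℓ => (hlog ℓ).1 (mul_le_mul_of_mem_subsimplex (hθpos k).le h ℓ),
    fun h => mem_subsimplex_of_forall_mul_le hθ hz (hθpos k) fun ℓ => (hlog ℓ).2 (h ℓ)⟩

end Subsimplex

lemma Fin.sum_succ_sub_castSucc {M : Type*} [AddCommGroup M] {m : ℕ} (G : Fin (m + 1) → M) :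
    ∑ i : Fin m, (G i.succ - G i.castSucc) = G (Fin.last m) - G 0 := by
  rw [Finset.sum_sub_distrib, sub_eq_sub_iff_add_eq_add, add_comm, ← Fin.sum_univ_succ,
    Fin.sum_univ_castSucc, add_comm]

-- `minWalk K w a b` is `sInf (simpleWalkWeights K w a b)` by definition.
def simpleWalkWeights (K : ℕ) (w : Fin K → Fin K → ℝ) (a b : Fin K) : Set ℝ :=
  {v : ℝ | ∃ (m : ℕ) (j : Fin (m + 1) → Fin K),
    j 0 = a ∧ j (Fin.last m) = b ∧ Function.Injective j ∧ v = walkWeight K w m j}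

section Walks

variable {K : ℕ} {w : Fin K → Fin K → ℝ} {φ : Fin K → ℝ} {a k : Fin K}

lemma sub_le_walkWeight {m : ℕ} {j : Fin (m + 1) → Fin K}
    (h : ∀ i : Fin m, φ (j i.succ) - φ (j i.castSucc) ≤ w (j i.castSucc) (j i.succ)) :
    φ (j (Fin.last m)) - φ (j 0) ≤ walkWeight K w m j := by
  calc φ (j (Fin.last m)) - φ (j 0) = ∑ i : Fin m, (φ (j i.succ) - φ (j i.castSucc)) :=
        (Fin.sum_succ_sub_castSucc (φ ∘ j)).symm
    _ ≤ walkWeight K w m j := Finset.sum_le_sum fun i _ => h i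

lemma walkWeight_cons {m : ℕ} (a : Fin K) (j : Fin (m + 1) → Fin K) :
    walkWeight K w (m + 1) (Fin.cons a j) = w a (j 0) + walkWeight K w m j := by
  simp [walkWeight, Fin.sum_univ_succ]

lemma walkWeight_add {s r : ℕ} (j : Fin (s + r + 1) → Fin K) :
    walkWeight K w (s + r) j = walkWeight K w s (fun i => j (Fin.castLE (by omega) i)) +
      walkWeight K w r (fun i => j (Fin.natAdd s i)) := by
  simp only [walkWeight, Fin.sum_univ_add]
  rfl

lemma simpleWalkWeights_nonempty (a b : Fin K) : (simpleWalkWeights K w a b).Nonempty := by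
  by_cases hab : a = b
  · exact ⟨0, 0, fun _ => a, rfl, hab, fun _ _ _ => Fin.ext (by omega), by simp [walkWeight]⟩
  · refine ⟨w a b, 1, ![a, b], rfl, rfl, fun i₁ i₂ h => ?_, by simp [walkWeight]⟩
    fin_cases i₁ <;> fin_cases i₂ <;> simp_all [eq_comm]

lemma sub_le_of_mem_simpleWalkWeights (hφ : ∀ a b, a ≠ k → φ b - φ a ≤ w a b) {v : ℝ}
    (hv : v ∈ simpleWalkWeights K w a k) : φ k - φ a ≤ v := by
  obtain ⟨m, j, rfl, rfl, hj, rfl⟩ := hv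
  exact sub_le_walkWeight fun i => hφ _ _ fun h => (Fin.castSucc_lt_last i).ne (hj h)

lemma sub_le_minWalk (hφ : ∀ a b, a ≠ k → φ b - φ a ≤ w a b) (a : Fin K) :
    φ k - φ a ≤ minWalk K w a k :=
  le_csInf (simpleWalkWeights_nonempty a k) fun _ => sub_le_of_mem_simpleWalkWeights hφ

lemma minWalk_le (hφ : ∀ a b, a ≠ k → φ b - φ a ≤ w a b) {v : ℝ}
    (hv : v ∈ simpleWalkWeights K w a k) : minWalk K w a k ≤ v :=
  csInf_le ⟨φ k - φ a, fun _ => sub_le_of_mem_simpleWalkWeights hφ⟩ hv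

lemma minWalk_self (hφ : ∀ a b, a ≠ k → φ b - φ a ≤ w a b) : minWalk K w k k = 0 :=
  le_antisymm
    (minWalk_le hφ ⟨0, fun _ => k, rfl, rfl, fun _ _ _ => Fin.ext (by omega),
      by simp [walkWeight]⟩)
    (by simpa using sub_le_minWalk hφ k)

lemma minWalk_le_add (hφ : ∀ a b, φ b - φ a ≤ w a b) (a b k : Fin K) :
    minWalk K w a k ≤ w a b + minWalk K w b k := by
  have hφk : ∀ a b, a ≠ k → φ b - φ a ≤ w a b := fun a b _ => hφ a b
  suffices h : ∀ v ∈ simpleWalkWeights K w b k, minWalk K w a k - w a b ≤ v by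
    have : minWalk K w a k - w a b ≤ minWalk K w b k :=
      le_csInf (simpleWalkWeights_nonempty b k) h
    linarith
  rintro _ ⟨m, j, hj0, hjm, hj, rfl⟩
  by_cases ha : a ∈ Set.range j
  · -- cut the walk at `a`; the discarded cycle `b → ⋯ → a → b` has nonnegative weight
    obtain ⟨⟨s, hs⟩, hjs⟩ := ha
    obtain ⟨r, rfl⟩ : ∃ r, m = s + r := ⟨m - s, by omega⟩
    have hcycle : φ a - φ b ≤ walkWeight K w s (fun i => j (Fin.castLE (by omega) i)) := by
      rw [← hjs, ← hj0]
      exact sub_le_walkWeight (j := fun i : Fin (s + 1) => j (Fin.castLE (by omega) i))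
        fun i => hφ _ _
    have hrest : minWalk K w a k ≤ walkWeight K w r (fun i => j (Fin.natAdd s i)) :=
      minWalk_le hφk ⟨r, _, hjs, hjm, hj.comp (Fin.natAdd_injective _ _), rfl⟩
    rw [walkWeight_add]
    linarith [hφ a b]
  · have hcons : w a b + walkWeight K w m j ∈ simpleWalkWeights K w a k :=
      ⟨m + 1, Fin.cons a j, rfl, by simpa using hjm, Fin.cons_injective_of_injective ha hj,
        by rw [walkWeight_cons, hj0]⟩
    linarith [minWalk_le hφk hcons]

end Walks

section Gibbs

variable {ι : Type*} [Fintype ι] [Nonempty ι] {f θ : ι → ℝ}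

lemma sum_exp_neg_pos (f : ι → ℝ) : 0 < ∑ i, exp (-f i) :=
  Finset.sum_pos (fun _ _ => exp_pos _) Finset.univ_nonempty

lemma pos_of_eq_exp_div_sum (hθ : ∀ i, θ i = exp (-f i) / ∑ j, exp (-f j)) (i : ι) :
    0 < θ i := by
  rw [hθ]
  exact div_pos (exp_pos _) (sum_exp_neg_pos f)

lemma mem_stdSimplex_of_eq_exp_div_sum (hθ : ∀ i, θ i = exp (-f i) / ∑ j, exp (-f j)) :
    θ ∈ stdSimplex ℝ ι := by
  refine ⟨fun i => (pos_of_eq_exp_div_sum hθ i).le, ?_⟩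
  rw [Finset.sum_congr rfl fun i _ => hθ i, ← Finset.sum_div]
  exact div_self (sum_exp_neg_pos f).ne'

lemma log_sub_log_of_eq_exp_div_sum (hθ : ∀ i, θ i = exp (-f i) / ∑ j, exp (-f j)) (i j : ι) :
    log (θ i) - log (θ j) = f j - f i := by
  have hZ := (sum_exp_neg_pos f).ne'
  rw [hθ, hθ, log_div (exp_pos _).ne' hZ, log_div (exp_pos _).ne' hZ, log_exp, log_exp]
  ring

end Gibbs

section Feasibility

variable {K N : ℕ} {x : Fin N → Fin K} {u : Fin N → Fin K → ℝ} {θ : Fin K → ℝ}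

lemma pos_of_forall_mem_subsimplex (hθ : θ ∈ stdSimplex ℝ (Fin K)) (hx : ∀ a, ∃ n, x n = a)
    (hu : ∀ n, u n ∈ stdSimplex ℝ (Fin K)) (hupos : ∀ n ℓ, 0 < u n ℓ)
    (hθu : ∀ n, u n ∈ subsimplex K (x n) θ) (a : Fin K) : 0 < θ a := by
  obtain ⟨n, rfl⟩ := hx a
  exact (hupos n (x n)).trans_le (le_of_mem_subsimplex hθ (hu n) (hθu n))

lemma log_sub_log_le_of_mem_subsimplex (hθ : θ ∈ stdSimplex ℝ (Fin K)) (hθpos : ∀ ℓ, 0 < θ ℓ)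
    (hu : ∀ n, u n ∈ stdSimplex ℝ (Fin K)) (hupos : ∀ n ℓ, 0 < u n ℓ) {a b : Fin K} {η : ℝ}
    (hη : ∃ n, x n = a ∧ η = u n b / u n a) (hθu : ∀ n, x n = a → u n ∈ subsimplex K a θ) :
    log (θ b) - log (θ a) ≤ log η := by
  obtain ⟨n, hn, rfl⟩ := hη
  rw [log_div (hupos n b).ne' (hupos n a).ne']
  exact (mem_subsimplex_iff_log hθ hθpos (hu n) (hupos n)).1 (hθu n hn) b

lemma log_le_log_div_of_isLeast (hupos : ∀ n ℓ, 0 < u n ℓ) {a b : Fin K} {η : ℝ}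
    (hη : IsLeast {v | ∃ n, x n = a ∧ v = u n b / u n a} η) {n : Fin N} (hn : x n = a) :
    log η ≤ log (u n b / u n a) := by
  obtain ⟨n₀, -, rfl⟩ := hη.1
  exact log_le_log (div_pos (hupos _ _) (hupos _ _)) (hη.2 ⟨n, hn, rfl⟩)

end Feasibility

theorem stmt16_general (K N : ℕ)
    (x : Fin N → Fin K) (hx : ∀ k, ∃ n, x n = k)
    (u : Fin N → Fin K → ℝ) (hu : ∀ n, u n ∈ stdSimplex ℝ (Fin K))
    (hupos : ∀ n ℓ, 0 < u n ℓ)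
    (hR : ∃ θ ∈ stdSimplex ℝ (Fin K), ∀ n, u n ∈ subsimplex K (x n) θ)
    (η : Fin K → Fin K → ℝ)
    (hη : ∀ k ℓ, IsLeast {v : ℝ | ∃ n, x n = k ∧ v = u n ℓ / u n k} (η k ℓ))
    (k : Fin K) (m : Fin K → ℝ)
    (hm : ∀ ℓ, m ℓ = minWalk K (fun a b => Real.log (η a b)) ℓ k)
    (θstar : Fin K → ℝ)
    (hθstar : ∀ ℓ, θstar ℓ = Real.exp (-(m ℓ)) / ∑ ℓ' : Fin K, Real.exp (-(m ℓ')))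
    (v : Fin N → Fin K → ℝ)
    (hv : ∀ n, x n = k → v n ∈ stdSimplex ℝ (Fin K))
    (hvpos : ∀ n, x n = k → ∀ ℓ, 0 < v n ℓ)
    (u' : Fin N → Fin K → ℝ)
    (hu' : ∀ n, u' n = if x n = k then v n else u n) :
    (∃ θ ∈ stdSimplex ℝ (Fin K), ∀ n, u' n ∈ subsimplex K (x n) θ) ↔
      ∀ n, x n = k → v n ∈ subsimplex K k θstar := by
  have : Nonempty (Fin K) := ⟨k⟩
  have hθstarΔ := mem_stdSimplex_of_eq_exp_div_sum hθstar
  have hθstarpos := pos_of_eq_exp_div_sum hθstar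
  obtain ⟨θ₀, hθ₀, hθ₀u⟩ := hR
  -- `log θ₀` is a potential for the edge weights, so there are no negative cycles
  have hφ₀ : ∀ a b, log (θ₀ b) - log (θ₀ a) ≤ log (η a b) := fun a b =>
    log_sub_log_le_of_mem_subsimplex hθ₀ (pos_of_forall_mem_subsimplex hθ₀ hx hu hupos hθ₀u)
      hu hupos (hη a b).1 fun n hn => hn ▸ hθ₀u n
  have hmk : m k = 0 := by rw [hm]; exact minWalk_self fun a b _ => hφ₀ a b
  constructor
  · rintro ⟨θ, hθ, hθu'⟩ n hn
    have hu'Δ : ∀ n, u' n ∈ stdSimplex ℝ (Fin K) := fun n => by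
      rw [hu' n]; split_ifs with h; exacts [hv n h, hu n]
    have hu'pos : ∀ n ℓ, 0 < u' n ℓ := fun n => by
      rw [hu' n]; split_ifs with h; exacts [hvpos n h, hupos n]
    have hθpos := pos_of_forall_mem_subsimplex hθ hx hu'Δ hu'pos hθu'
    -- `u'` agrees with `u` off `I_k`, so `log θ` is a potential for every edge not leaving `k`
    have hφ : ∀ a b, a ≠ k → log (θ b) - log (θ a) ≤ log (η a b) := fun a b hak =>
      log_sub_log_le_of_mem_subsimplex hθ hθpos hu hupos (hη a b).1 fun n' hn' => by
        simpa [hu' n', hn', hak] using hθu' n'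
    have hvθ : v n ∈ subsimplex K k θ := by simpa [hu' n, hn] using hθu' n
    refine (mem_subsimplex_iff_log hθstarΔ hθstarpos (hv n hn) (hvpos n hn)).2 fun ℓ => ?_
    have hθv := (mem_subsimplex_iff_log hθ hθpos (hv n hn) (hvpos n hn)).1 hvθ ℓ
    have hθm := sub_le_minWalk hφ ℓ
    rw [log_sub_log_of_eq_exp_div_sum hθstar, hmk, hm ℓ]
    linarith
  · intro hvθ
    refine ⟨θstar, hθstarΔ, fun n => ?_⟩
    rw [hu' n]
    split_ifs with hn
    · exact hn ▸ hvθ n hn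
    refine (mem_subsimplex_iff_log hθstarΔ hθstarpos (hu n) (hupos n)).2 fun ℓ => ?_
    rw [log_sub_log_of_eq_exp_div_sum hθstar, hm, hm, ← log_div (hupos n ℓ).ne' (hupos n _).ne']
    exact (sub_le_iff_le_add.2 (minWalk_le_add hφ₀ (x n) ℓ k)).trans
      (log_le_log_div_of_isLeast hupos (hη (x n) ℓ) rfl)

theorem stmt16 (K N : ℕ) (hK : 2 ≤ K) (hN : 1 ≤ N)
    (x : Fin N → Fin K) (hx : ∀ k, ∃ n, x n = k)
    (u : Fin N → Fin K → ℝ) (hu : ∀ n, u n ∈ stdSimplex ℝ (Fin K))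
    (hupos : ∀ n ℓ, 0 < u n ℓ)
    (hR : ∃ θ ∈ stdSimplex ℝ (Fin K), ∀ n, u n ∈ subsimplex K (x n) θ)
    (η : Fin K → Fin K → ℝ)
    (hη : ∀ k ℓ, IsLeast {v : ℝ | ∃ n, x n = k ∧ v = u n ℓ / u n k} (η k ℓ))
    (k : Fin K) (m : Fin K → ℝ)
    (hm : ∀ ℓ, m ℓ = minWalk K (fun a b => Real.log (η a b)) ℓ k)
    (θstar : Fin K → ℝ)
    (hθstar : ∀ ℓ, θstar ℓ = Real.exp (-(m ℓ)) / ∑ ℓ' : Fin K, Real.exp (-(m ℓ')))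
    (v : Fin N → Fin K → ℝ)
    (hv : ∀ n, x n = k → v n ∈ stdSimplex ℝ (Fin K))
    (hvpos : ∀ n, x n = k → ∀ ℓ, 0 < v n ℓ)
    (u' : Fin N → Fin K → ℝ)
    (hu' : ∀ n, u' n = if x n = k then v n else u n) :
    (∃ θ ∈ stdSimplex ℝ (Fin K), ∀ n, u' n ∈ subsimplex K (x n) θ) ↔
      ∀ n, x n = k → v n ∈ subsimplex K k θstar :=
  stmt16_general K N x hx u hu hupos hR η hη k m hm θstar hθstar v hv hvpos u' hu'
end
end
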